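/- arXiv:2012.13913 — 2 statements merged into one kernel-verified Lean document; each statement's English description precedes it below -/
import Mathlib

section
/- For every x ∈ (0,1), the derivative of the shifted weight satisfies (d/dx) W(x;a+1,b+1;d+1,c+2) = (c(c+1)d)/(a(c−b)) · ( W(x;a,b;c,d) − W(x;a,b+1;c+1,d) ). -/
open MeasureTheory

/-- Pochhammer symbol `(z)_n = z (z+1) ⋯ (z+n-1)`. -/
noncomputable def poch (z : ℝ) (n : ℕ) : ℝ := ∏ i ∈ Finset.range n, (z + i)

/-- Gauss hypergeometric series `₂F₁(α, β; γ; z)`. -/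
noncomputable def twoF1 (α β γ z : ℝ) : ℝ :=
  ∑' n : ℕ, (poch α n * poch β n) / (poch γ n * n.factorial) * z ^ n

/-- The weight function `W(x; a, b; c, d)`. -/
noncomputable def W (a b c d : ℝ) (x : ℝ) : ℝ :=
  (Real.Gamma c * Real.Gamma d) /
      (Real.Gamma a * Real.Gamma b * Real.Gamma (c + d - a - b)) *
    (x ^ (a - 1) * (1 - x) ^ (c + d - a - b - 1) *
      twoF1 (c - b) (d - b) (c + d - a - b) (1 - x))

/-!
Write `t = 1 - x` and `δ = c + d - a - b`. The shifted weight is a constant multiple of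
`x ^ a * t ^ δ * F t` with `F = ₂F₁(d - b, c - b + 1; δ + 1; ·)`, whose derivative is
`x ^ (a - 1) * t ^ (δ - 1) * (a t F - x (δ F + t F'))`. Comparing coefficients of `tⁿ`, the
bracket is the contiguous combination
`δ / (c - b) * (b ₂F₁(c - b, d - b; δ; t) - c ₂F₁(c - b, d - b - 1; δ; t))`,
and the Gamma prefactors match by `Γ (s + 1) = s Γ s`. Termwise differentiation of the series on
`|t| < 1` is justified by the ratio test.
-/

open Filter Topology Set Real

lemma poch_zero (z : ℝ) : poch z 0 = 1 := Finset.prod_range_zero _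

lemma poch_succ_right (z : ℝ) (n : ℕ) : poch z (n + 1) = poch z n * (z + n) :=
  Finset.prod_range_succ _ _

lemma poch_succ_left (z : ℝ) (n : ℕ) : poch z (n + 1) = z * poch (z + 1) n := by
  simp only [poch, Finset.prod_range_succ', Nat.cast_add, Nat.cast_one, Nat.cast_zero, add_zero,
    add_assoc, add_comm (1 : ℝ)]
  ring

lemma poch_pos {z : ℝ} (hz : 0 < z) (n : ℕ) : 0 < poch z n :=
  Finset.prod_pos fun _ _ => by positivity

noncomputable def twoF1Coeff (α β γ : ℝ) (n : ℕ) : ℝ :=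
  poch α n * poch β n / (poch γ n * n.factorial)

lemma twoF1_eq_tsum (α β γ z : ℝ) :
    twoF1 α β γ z = ∑' n, twoF1Coeff α β γ n * z ^ n := rfl

lemma twoF1Coeff_zero (α β γ : ℝ) : twoF1Coeff α β γ 0 = 1 := by
  simp [twoF1Coeff, poch_zero]

section Coeff

variable (α β : ℝ) {γ : ℝ}

lemma twoF1Coeff_succ (hγ : 0 < γ) (n : ℕ) :
    twoF1Coeff α β γ (n + 1) =
      twoF1Coeff α β γ n * ((α + n) * (β + n) / ((γ + n) * (n + 1))) := by
  have := poch_pos hγ n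
  simp only [twoF1Coeff, poch_succ_right, Nat.factorial_succ, Nat.cast_mul, Nat.cast_succ]
  field_simp

lemma twoF1Coeff_succ_mul (hγ : 0 < γ) (n : ℕ) :
    twoF1Coeff α β γ (n + 1) * (n + 1) =
      α * β / γ * twoF1Coeff (α + 1) (β + 1) (γ + 1) n := by
  have := poch_pos (show 0 < γ + 1 by linarith) n
  simp only [twoF1Coeff, poch_succ_left, Nat.factorial_succ, Nat.cast_mul, Nat.cast_succ]
  field_simp

end Coeff

lemma tendsto_twoF1Coeff_ratio (α β γ : ℝ) :
    Tendsto (fun n : ℕ => (α + n) * (β + n) / ((γ + n) * (n + 1))) atTop (𝓝 1) := by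
  have h (x y : ℝ) : Tendsto (fun n : ℕ => (x + n) / (y + n)) atTop (𝓝 1) := by
    simpa using tendsto_add_mul_div_add_mul_atTop_nhds x y (1 : ℝ) one_ne_zero
  simpa [mul_div_mul_comm, add_comm] using (h α γ).mul (h β 1)

section Series

variable (α β : ℝ) {γ : ℝ} {t : ℝ}

lemma summable_twoF1Coeff_mul_pow (hγ : 0 < γ) (ht : |t| < 1) :
    Summable fun n => twoF1Coeff α β γ n * t ^ n := by
  set ρ := fun n : ℕ => (α + n) * (β + n) / ((γ + n) * (n + 1))
  obtain ⟨r, htr, hr1⟩ := exists_between ht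
  have hlim := ((tendsto_twoF1Coeff_ratio α β γ).mul_const t).norm
  refine summable_of_ratio_norm_eventually_le hr1 ?_
  filter_upwards [hlim.eventually_le_const (by simpa using htr)] with n hn
  rw [twoF1Coeff_succ α β hγ n, pow_succ,
    show twoF1Coeff α β γ n * ρ n * (t ^ n * t) = ρ n * t * (twoF1Coeff α β γ n * t ^ n) by
      ring, norm_mul]
  exact mul_le_mul_of_nonneg_right hn (norm_nonneg _)

lemma summable_twoF1Coeff_mul_natCast_mul_pow (hγ : 0 < γ) (ht : |t| < 1) :
    Summable fun n : ℕ => twoF1Coeff α β γ n * (n * t ^ (n - 1)) := by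
  rw [← summable_nat_add_iff 1]
  refine ((summable_twoF1Coeff_mul_pow (α + 1) (β + 1) (show 0 < γ + 1 by linarith) ht).mul_left
    (α * β / γ)).congr fun n => ?_
  rw [← mul_assoc, ← twoF1Coeff_succ_mul α β hγ n]
  push_cast
  ring

lemma hasDerivAt_twoF1 (hγ : 0 < γ) (ht : |t| < 1) :
    HasDerivAt (twoF1 α β γ) (∑' n : ℕ, twoF1Coeff α β γ n * (n * t ^ (n - 1))) t := by
  obtain ⟨r, htr, hr1⟩ := exists_between ht
  have hr0 : 0 < r := (abs_nonneg t).trans_lt htr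
  have hr : |r| < 1 := by rwa [abs_of_pos hr0]
  have hmem : t ∈ Ioo (-r) r := abs_lt.mp htr
  refine hasDerivAt_tsum_of_isPreconnected (g := fun n z => twoF1Coeff α β γ n * z ^ n)
    (summable_twoF1Coeff_mul_natCast_mul_pow α β hγ hr).abs isOpen_Ioo isPreconnected_Ioo
    (fun n y _ => (hasDerivAt_pow n y).const_mul _) (fun n y hy => ?_) hmem
    (summable_twoF1Coeff_mul_pow α β hγ ht) hmem
  have : |y| ≤ |r| := by rw [abs_of_pos hr0]; exact abs_le.mpr ⟨hy.1.le, hy.2.le⟩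
  simp only [Real.norm_eq_abs, abs_mul, abs_pow, Nat.abs_cast]
  gcongr

end Series

section Contiguous

variable {a b c d : ℝ}

lemma twoF1Coeff_contiguous (hδ : 0 < c + d - a - b) (hbc : b ≠ c) (m : ℕ) :
    (c + d - b + m) * twoF1Coeff (d - b) (c - b + 1) (c + d - a - b + 1) m
      - (c + d - a - b + (m + 1)) * twoF1Coeff (d - b) (c - b + 1) (c + d - a - b + 1) (m + 1)
    = (c + d - a - b) / (c - b) * (b * twoF1Coeff (c - b) (d - b) (c + d - a - b) (m + 1)
        - c * twoF1Coeff (c - b) (d - b - 1) (c + d - a - b) (m + 1)) := by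
  have := poch_pos (show 0 < c + d - a - b + 1 by linarith) m
  have := sub_ne_zero.2 hbc.symm
  have : c + d - a - b + 1 + m ≠ 0 := by positivity
  simp only [twoF1Coeff]
  rw [poch_succ_right (d - b), poch_succ_right (c - b + 1), poch_succ_right (c + d - a - b + 1),
    poch_succ_left (c - b), poch_succ_left (c + d - a - b), poch_succ_left (d - b - 1),
    show d - b - 1 + 1 = d - b by ring, Nat.factorial_succ]
  push_cast
  field_simp
  ring

lemma twoF1_contiguous (hδ : 0 < c + d - a - b) (hbc : b ≠ c) {t : ℝ} (ht : |t| < 1) :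
    a * t * twoF1 (d - b) (c - b + 1) (c + d - a - b + 1) t
      - (1 - t) * ((c + d - a - b) * twoF1 (d - b) (c - b + 1) (c + d - a - b + 1) t
          + t * deriv (twoF1 (d - b) (c - b + 1) (c + d - a - b + 1)) t)
    = (c + d - a - b) / (c - b) * (b * twoF1 (c - b) (d - b) (c + d - a - b) t
        - c * twoF1 (c - b) (d - b - 1) (c + d - a - b) t) := by
  set δ := c + d - a - b
  have hδ1 : 0 < δ + 1 := by linarith
  have hF := (summable_twoF1Coeff_mul_pow (d - b) (c - b + 1) hδ1 ht).hasSum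
  have hD := (summable_twoF1Coeff_mul_natCast_mul_pow (d - b) (c - b + 1) hδ1 ht).hasSum
  have hF0 := (summable_twoF1Coeff_mul_pow (c - b) (d - b) hδ ht).hasSum
  have hF2 := (summable_twoF1Coeff_mul_pow (c - b) (d - b - 1) hδ ht).hasSum
  rw [← twoF1_eq_tsum] at hF hF0 hF2
  rw [← (hasDerivAt_twoF1 (d - b) (c - b + 1) hδ1 ht).deriv] at hD
  set e := twoF1Coeff (d - b) (c - b + 1) (δ + 1)
  set F := twoF1 (d - b) (c - b + 1) (δ + 1) t
  set D := deriv (twoF1 (d - b) (c - b + 1) (δ + 1)) t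
  have he0 : e 0 = 1 := twoF1Coeff_zero _ _ _
  have hθ : HasSum (fun n : ℕ => (δ + n) * e n * t ^ n) (δ * F + t * D) := by
    refine ((hF.mul_left δ).add (hD.mul_left t)).congr_fun fun n => ?_
    rcases n with _ | n
    · simp
    · push_cast [Nat.add_sub_cancel]
      ring
  have hθ' := (hasSum_nat_add_iff' 1).2 hθ
  have hR := ((hF0.mul_left b).sub (hF2.mul_left c)).mul_left (δ / (c - b))
  have hR' := (hasSum_nat_add_iff' 1).2 hR
  have hS := ((hF.mul_left (a * t)).add (hθ.mul_left t)).sub hθ'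
  -- the coefficients of `tⁿ⁺¹` agree; the constant terms are `-δ = δ / (c - b) * (b - c)`
  have hS_eq := hS.unique (hR'.congr_fun fun n => ?_)
  · simp only [Finset.sum_range_one, he0, twoF1Coeff_zero, Nat.cast_zero] at hS_eq
    have := sub_ne_zero.2 hbc.symm
    field_simp at hS_eq ⊢
    linear_combination hS_eq
  · push_cast
    linear_combination (t ^ (n + 1)) * twoF1Coeff_contiguous hδ hbc n

end Contiguous

lemma hasDerivAt_rpow_mul_one_sub_rpow_mul_comp {p q x : ℝ} {f : ℝ → ℝ} (hx : x ∈ Ioo 0 1)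
    (hf : DifferentiableAt ℝ f (1 - x)) :
    HasDerivAt (fun y => y ^ p * (1 - y) ^ q * f (1 - y))
      (x ^ (p - 1) * (1 - x) ^ (q - 1) *
        (p * (1 - x) * f (1 - x) - x * (q * f (1 - x) + (1 - x) * deriv f (1 - x)))) x := by
  have hx0 : x ≠ 0 := hx.1.ne'
  have hx1 : 1 - x ≠ 0 := (sub_pos.2 hx.2).ne'
  have hsub := (hasDerivAt_id x).const_sub 1
  refine (((Real.hasDerivAt_rpow_const (p := p) (Or.inl hx0)).mul
    (hsub.rpow_const (p := q) (Or.inl hx1))).mul (hf.hasDerivAt.comp x hsub)).congr_deriv ?_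
  simp only [id, Function.comp_apply, Pi.mul_apply]
  rw [Real.rpow_sub_one hx0, Real.rpow_sub_one hx1]
  field_simp
  ring

lemma hasDerivAt_W_shifted {a b c d x : ℝ} (hx : x ∈ Ioo 0 1) (hδ : 0 < c + d - a - b) :
    HasDerivAt (W (a + 1) (b + 1) (d + 1) (c + 2))
      (Gamma (d + 1) * Gamma (c + 2) / (Gamma (a + 1) * Gamma (b + 1) * Gamma (c + d - a - b + 1)) *
        (x ^ (a - 1) * (1 - x) ^ (c + d - a - b - 1) *
          (a * (1 - x) * twoF1 (d - b) (c - b + 1) (c + d - a - b + 1) (1 - x)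
            - x * ((c + d - a - b) * twoF1 (d - b) (c - b + 1) (c + d - a - b + 1) (1 - x)
              + (1 - x) * deriv (twoF1 (d - b) (c - b + 1) (c + d - a - b + 1)) (1 - x))))) x := by
  have hW : W (a + 1) (b + 1) (d + 1) (c + 2) = fun y =>
      Gamma (d + 1) * Gamma (c + 2) / (Gamma (a + 1) * Gamma (b + 1) * Gamma (c + d - a - b + 1)) *
        (y ^ a * (1 - y) ^ (c + d - a - b) *
          twoF1 (d - b) (c - b + 1) (c + d - a - b + 1) (1 - y)) := by
    funext y
    simp only [W]
    ring_nf
  have ht : |1 - x| < 1 := abs_lt.2 ⟨by linarith [hx.2], by linarith [hx.1]⟩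
  rw [hW]
  exact (hasDerivAt_rpow_mul_one_sub_rpow_mul_comp hx
    (hasDerivAt_twoF1 _ _ (by linarith) ht).differentiableAt).const_mul _

/-- Derivative of the shifted weight `W(x;a+1,b+1;d+1,c+2)`:
`(d/dx) W(x;a+1,b+1;d+1,c+2) = (c(c+1)d)/(a(c−b)) · (W(x;a,b;c,d) − W(x;a,b+1;c+1,d))`. -/
theorem deriv_shifted_weight_first (a b c d : ℝ)
    (ha : 0 < a) (hb : 0 < b) (hc : 0 < c) (hd : 0 < d)
    (hcd : max a b < min c d) :
    ∀ x ∈ Set.Ioo (0 : ℝ) 1,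
      deriv (W (a + 1) (b + 1) (d + 1) (c + 2)) x =
        ((c * (c + 1) * d) / (a * (c - b))) *
          (W a b c d x - W a (b + 1) (c + 1) d x) := by
  intro x hx
  obtain ⟨⟨hac, hbc⟩, -, hbd⟩ : (a < c ∧ b < c) ∧ a < d ∧ b < d := by
    simpa only [max_lt_iff, lt_min_iff] using hcd
  have hδ : 0 < c + d - a - b := by linarith
  have hcont := twoF1_contiguous hδ hbc.ne (t := 1 - x)
    (abs_lt.2 ⟨by linarith [hx.2], by linarith [hx.1]⟩)
  rw [sub_sub_cancel] at hcont
  have hW : W a (b + 1) (c + 1) d x =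
      Gamma (c + 1) * Gamma d / (Gamma a * Gamma (b + 1) * Gamma (c + d - a - b)) *
        (x ^ (a - 1) * (1 - x) ^ (c + d - a - b - 1) *
          twoF1 (c - b) (d - b - 1) (c + d - a - b) (1 - x)) := by
    simp only [W]
    ring_nf
  rw [(hasDerivAt_W_shifted hx hδ).deriv, hcont, hW, W]
  rw [Gamma_add_one ha.ne', Gamma_add_one hb.ne', Gamma_add_one hd.ne', Gamma_add_one hδ.ne',
    show c + 2 = c + 1 + 1 by ring, Gamma_add_one (by positivity), Gamma_add_one hc.ne']
  have := Gamma_pos_of_pos ha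
  have := Gamma_pos_of_pos hb
  have := Gamma_pos_of_pos hδ
  have := sub_pos.2 hbc
  field_simp
end

section
/- Third-order differential equation: for every n ∈ ℕ the polynomial P_n(x) := P_n(x;a,b;c,d) satisfies, for all x, x²(1−x) P_n'''(x) − x φ(x) P_n''(x) + ψ_n(x) P_n'(x) + n λ_n P_n(x) = 0, where φ(x) := (c+d+2)x − (a+b+1), λ_n := (c+⌊n/2⌋)(d+⌊(n−1)/2⌋), and ψ_n(x) := ((n−1)(c+d+n) − λ_n) x + ab. -/
/-!
Write `P_n = ∑ₘ Aₘ xᵐ`. Since `xᵏ (d/dx)ʲ` multiplies the coefficient of `xᵐ` by the falling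
factorial `m(m-1)⋯(m-j+1)`, the coefficient of `xᵐ` on the left-hand side of the equation is
`(m+1)(m+a)(m+b) A_{m+1} + (n-m)(m+γ)(m+δ) Aₘ` with `γ = c + ⌊n/2⌋` and `δ = d + ⌊(n-1)/2⌋`;
the second factorisation uses `γ + δ = c + d + n - 1`, which holds for `n ≥ 1`. This vanishes
because `Aₘ` is a terminating hypergeometric term with exactly this ratio `A_{m+1} / Aₘ`.
-/

open Polynomial Finset

/-- The type II multiple orthogonal polynomial of degree `n` on the step line. -/
noncomputable def P (a b c d : ℝ) (n : ℕ) (x : ℝ) : ℝ :=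
  ∑ j ∈ Finset.range (n + 1),
    (n.choose j : ℝ) * (-1 : ℝ) ^ j *
      (poch (a + n - j) j * poch (b + n - j) j) /
      (poch (c + (n / 2 : ℕ) + n - j) j * poch (d + ((n - 1) / 2 : ℕ) + n - j) j) *
      x ^ (n - j)

namespace Polynomial

variable {R : Type*} [CommSemiring R]

theorem coeff_X_pow_mul_iterate_derivative (p : R[X]) (k m : ℕ) :
    (X ^ k * derivative^[k] p).coeff m = m.descFactorial k • p.coeff m := by
  rw [coeff_X_pow_mul']
  split_ifs with h
  · rw [coeff_iterate_derivative, Nat.sub_add_cancel h]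
  · rw [Nat.descFactorial_eq_zero_iff_lt.mpr (by omega), zero_smul]

theorem coeff_X_pow_mul_iterate_derivative_succ (p : R[X]) (k m : ℕ) :
    (X ^ k * derivative^[k + 1] p).coeff m =
      (m + 1).descFactorial (k + 1) • p.coeff (m + 1) := by
  rw [← coeff_X_mul, ← mul_assoc, ← pow_succ', coeff_X_pow_mul_iterate_derivative]

end Polynomial

theorem deriv_polynomial_eval (p : ℝ[X]) :
    deriv (fun x => p.eval x) = fun x => (derivative p).eval x :=
  funext fun _ => p.deriv

theorem ode_of_coeff_recurrence (Q : ℝ[X]) (α β γ δ : ℝ) (n : ℕ)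
    (hQ : ∀ m : ℕ, ((m : ℝ) + 1) * (m + α) * (m + β) * Q.coeff (m + 1) +
      (n - m) * (m + γ) * (m + δ) * Q.coeff m = 0) (x : ℝ) :
    x ^ 2 * (1 - x) * deriv (deriv (deriv (fun y => Q.eval y))) x -
        x * ((γ + δ + 3 - n) * x - (α + β + 1)) * deriv (deriv (fun y => Q.eval y)) x +
        (((n - 1) * (γ + δ + 1) - γ * δ) * x + α * β) * deriv (fun y => Q.eval y) x +
        n * γ * δ * Q.eval x = 0 := by
  -- each term is written in the shape of one of the two coefficient lemmas above
  have hL : X ^ 2 * derivative^[2 + 1] Q + C (α + β + 1) * (X ^ 1 * derivative^[1 + 1] Q) +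
      C (α * β) * (X ^ 0 * derivative^[0 + 1] Q) - X ^ 3 * derivative^[3] Q -
      C (γ + δ + 3 - n) * (X ^ 2 * derivative^[2] Q) +
      C ((n - 1) * (γ + δ + 1) - γ * δ) * (X ^ 1 * derivative^[1] Q) +
      C (n * γ * δ) * (X ^ 0 * derivative^[0] Q) = 0 := by
    ext m
    simp only [coeff_add, coeff_sub, coeff_C_mul, coeff_X_pow_mul_iterate_derivative,
      coeff_X_pow_mul_iterate_derivative_succ, coeff_zero, nsmul_eq_mul,
      ← descPochhammer_eval_eq_descFactorial, descPochhammer_succ_right, descPochhammer_zero,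
      Nat.cast_add, Nat.cast_one, Nat.cast_ofNat, CharP.cast_eq_zero, sub_zero, one_mul,
      eval_mul, eval_X, eval_sub, eval_one, eval_ofNat]
    linear_combination hQ m
  have hLx := congrArg (eval x) hL
  simp only [Function.iterate_succ, Function.iterate_zero, Function.comp_apply, id_eq, pow_one,
    pow_zero, one_mul, eval_add, eval_sub, eval_mul, eval_pow, eval_X, eval_C, eval_zero,
    deriv_polynomial_eval] at hLx ⊢
  linear_combination hLx

theorem poch_succ (z : ℝ) (k : ℕ) : poch z (k + 1) = z * poch (z + 1) k := by
  simp only [poch, prod_range_succ', Nat.cast_add, Nat.cast_one, Nat.cast_zero, add_zero]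
  rw [mul_comm]
  exact congrArg _ (prod_congr rfl fun i _ => by ring)

noncomputable def hypergeomCoeff (α β γ δ : ℝ) (n m : ℕ) : ℝ :=
  if m ≤ n then
    n.choose m * (-1) ^ (n - m) *
      (poch (α + m) (n - m) * poch (β + m) (n - m) / (poch (γ + m) (n - m) * poch (δ + m) (n - m)))
  else 0

noncomputable def hypergeomPoly (α β γ δ : ℝ) (n : ℕ) : ℝ[X] :=
  ∑ m ∈ range (n + 1), C (hypergeomCoeff α β γ δ n m) * X ^ m

theorem coeff_hypergeomPoly (α β γ δ : ℝ) (n m : ℕ) :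
    (hypergeomPoly α β γ δ n).coeff m = hypergeomCoeff α β γ δ n m := by
  simp only [hypergeomPoly, finsetSum_coeff, coeff_C_mul_X_pow]
  rw [sum_ite_eq]
  split_ifs with h
  · rfl
  · rw [hypergeomCoeff, if_neg (by simpa [Nat.lt_succ_iff] using h)]

theorem hypergeomCoeff_recurrence (α β γ δ : ℝ) (n m : ℕ) (hγ : γ + m ≠ 0) (hδ : δ + m ≠ 0) :
    ((m : ℝ) + 1) * (m + α) * (m + β) * hypergeomCoeff α β γ δ n (m + 1) +
      (n - m) * (m + γ) * (m + δ) * hypergeomCoeff α β γ δ n m = 0 := by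
  rcases lt_or_ge m n with hmn | hnm
  · obtain ⟨k, hk⟩ : ∃ k, n - m = k + 1 := ⟨n - m - 1, by omega⟩
    have hchoose : (n.choose (m + 1) : ℝ) * (m + 1) = n.choose m * (k + 1) := by
      exact_mod_cast hk ▸ Nat.choose_succ_right_eq n m
    have hsub : (n : ℝ) - m = k + 1 := by
      rw [← Nat.cast_sub hmn.le, hk]; push_cast; ring
    rw [hypergeomCoeff, hypergeomCoeff, if_pos (show m + 1 ≤ n from hmn), if_pos hmn.le, hk,
      show n - (m + 1) = k by omega, poch_succ (α + m), poch_succ (β + m), poch_succ (γ + m),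
      poch_succ (δ + m), hsub]
    push_cast
    simp only [← add_assoc]
    -- the Pochhammer quotient shared by both terms may vanish, so it is kept as an atom
    set R := poch (α + m + 1) k * poch (β + m + 1) k / (poch (γ + m + 1) k * poch (δ + m + 1) k)
    have hR : (α + m) * poch (α + m + 1) k * ((β + m) * poch (β + m + 1) k) /
        ((γ + m) * poch (γ + m + 1) k * ((δ + m) * poch (δ + m + 1) k)) =
        (α + m) * (β + m) / ((γ + m) * (δ + m)) * R := by
      rw [mul_mul_mul_comm, mul_mul_mul_comm (γ + m), mul_div_mul_comm]
    rw [hR]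
    clear_value R
    field_simp
    linear_combination (-1) ^ k * (m + α) * (m + β) * (γ + m) * (δ + m) * R * hchoose
  · rcases hnm.eq_or_lt with rfl | hlt
    · simp [hypergeomCoeff]
    · simp [hypergeomCoeff, hlt.not_ge, show ¬ m + 1 ≤ n by omega]

theorem P_eq_eval_hypergeomPoly (a b c d : ℝ) (n : ℕ) :
    P a b c d n =
      fun x => (hypergeomPoly a b (c + (n / 2 : ℕ)) (d + ((n - 1) / 2 : ℕ)) n).eval x := by
  funext x
  rw [P, hypergeomPoly, eval_finsetSum, ← sum_range_reflect]
  refine sum_congr rfl fun j hj => ?_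
  have hjn : j ≤ n := Nat.lt_succ_iff.mp (mem_range.mp hj)
  rw [eval_C_mul, eval_X_pow, hypergeomCoeff, if_pos hjn, Nat.add_sub_cancel,
    Nat.choose_symm hjn, Nat.sub_sub_self hjn, Nat.cast_sub hjn]
  ring_nf

theorem P_zero (a b c d : ℝ) : P a b c d 0 = fun _ => 1 := by
  funext x
  simp [P, poch]

theorem third_order_ode_typeII_general (a b c d : ℝ)
    (hc : 0 < c) (hd : 0 < d) :
    ∀ (n : ℕ) (x : ℝ),
      x ^ 2 * (1 - x) * deriv (deriv (deriv (P a b c d n))) x -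
        x * ((c + d + 2) * x - (a + b + 1)) * deriv (deriv (P a b c d n)) x +
        ((((n : ℝ) - 1) * (c + d + n) -
            (c + (n / 2 : ℕ)) * (d + ((n - 1) / 2 : ℕ))) * x + a * b) *
          deriv (P a b c d n) x +
        (n : ℝ) * ((c + (n / 2 : ℕ)) * (d + ((n - 1) / 2 : ℕ))) * P a b c d n x = 0 := by
  intro n x
  rcases Nat.eq_zero_or_pos n with rfl | hn
  · simp [P_zero]
  have hsum : (c + (n / 2 : ℕ)) + (d + ((n - 1) / 2 : ℕ)) = c + d + n - 1 := by
    have h : ((n / 2 + (n - 1) / 2 + 1 : ℕ) : ℝ) = n := by congr 1; omega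
    push_cast at h
    linear_combination h
  have hode := ode_of_coeff_recurrence _ a b (c + (n / 2 : ℕ)) (d + ((n - 1) / 2 : ℕ)) n
    (fun m => by
      rw [coeff_hypergeomPoly, coeff_hypergeomPoly]
      exact hypergeomCoeff_recurrence _ _ _ _ n m (by positivity) (by positivity)) x
  rw [hsum] at hode
  rw [P_eq_eval_hypergeomPoly]
  linear_combination hode

/-- Third-order differential equation satisfied by the type II polynomials:
`x²(1−x) P_n''' − x φ(x) P_n'' + ψ_n(x) P_n' + n λ_n P_n = 0` with
`φ(x) = (c+d+2)x − (a+b+1)`, `λ_n = (c+⌊n/2⌋)(d+⌊(n−1)/2⌋)` and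
`ψ_n(x) = ((n−1)(c+d+n) − λ_n)x + ab`. -/
theorem third_order_ode_typeII (a b c d : ℝ)
    (ha : 0 < a) (hb : 0 < b) (hc : 0 < c) (hd : 0 < d)
    (hcd : max a b < min c d) :
    ∀ (n : ℕ) (x : ℝ),
      x ^ 2 * (1 - x) * deriv (deriv (deriv (P a b c d n))) x -
        x * ((c + d + 2) * x - (a + b + 1)) * deriv (deriv (P a b c d n)) x +
        ((((n : ℝ) - 1) * (c + d + n) -
            (c + (n / 2 : ℕ)) * (d + ((n - 1) / 2 : ℕ))) * x + a * b) *
          deriv (P a b c d n) x +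
        (n : ℝ) * ((c + (n / 2 : ℕ)) * (d + ((n - 1) / 2 : ℕ))) * P a b c d n x = 0 :=
  third_order_ode_typeII_general a b c d hc hd
end
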